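/- arXiv:1310.4544 — 4 statements merged into one kernel-verified Lean document; each statement's English description precedes it below -/
import Mathlib

section
/- Let Σ and Λ be finite alphabets, n ≥ 1, 0 ≤ ε < 1/2, and N = 2^m for some m ≥ 1. Let P(X¹, X²₁, …, X²_N | U¹, U²₁, …, U²_N) be a family of conditional distributions with outputs X¹, X²_k ∈ Σⁿ and inputs U¹, U²_k ∈ Λⁿ, which is no-signaling between the N+1 blocks: for every subset of blocks, the marginal distribution of the outputs of those blocks depends only on the inputs of those blocks. Let ν be a probability distribution over (j, U¹, U²₁, …, U²_N) ∈ {1,…,N} × (Λⁿ)^{N+1} such that ν(j | U¹, U²₁,…,U²_N) ≤ (1/2 + ε)^{log₂ N} for all j and all inputs (as holds when j is specified by log₂ N bits of an ε-SV source). For fixed (j, U¹, U²) and prior outputs X²_{<j} = (X²₁,…,X²_{j−1}) of positive probability, define the conditional box P̃(X¹, X²_j | U¹, U²_j) := P(X¹, X²_j | X²_{<j}, U¹, U²), with marginals P̃(X¹ | U¹) and P̃(X²_j | U²_j). Then E_{(j, U¹, U²) ∼ ν} E_{X²_{<j} ∼ P(·|U¹,U²)} ‖ P̃(X¹, X²_j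 | U¹, U²_j) − P̃(X¹ | U¹) ⊗ P̃(X²_j | U²_j) ‖ ≤ sqrt( 2 ln(2) · N^{log₂(1+2ε)} · n log₂|Σ| / N ). -/
/-!
For fixed inputs, the conditional box is the conditional distribution of the first device's
output `X¹` and of the block `X²_j` given the earlier blocks `X²_{<j}`. By Pinsker's inequality
and the concavity of `√`, its average `ℓ₁` distance to the product of its marginals is at most
`√(2 I(X¹; X²_j | X²_{<j}))`. By the chain rule these conditional mutual informations add up,
over `j`, to at most `H(X¹) ≤ n log |Σ|`. Given the inputs, the SV source selects each `j` with
probability at most `(1/2 + ε)^m`, so the `ν`-average of the mutual information is at most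
`(1/2 + ε)^m n log |Σ|`, and `(1/2 + ε)^m = N^{log₂(1 + 2ε)} / N`.
-/

open Classical

noncomputable section

/-- `X` agrees with the record `Y` of prior outputs on all blocks of the second device
strictly before block `j` (block `k` of the second device is block `k.succ` of the
joint device, block `0` being the first device). -/
def priorAgree {O : Type} {n N : ℕ} (j : Fin N) (Y : Fin N → Fin n → O)
    (X : Fin (N + 1) → Fin n → O) : Prop :=
  ∀ k : Fin N, k < j → X k.succ = Y k

/-- Probability (under `P(·|U)`) of the prior outputs recorded in `Y`. -/
def priorProb {O I : Type} [Fintype O] [Fintype I] {n N : ℕ}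
    (P : (Fin (N + 1) → Fin n → I) → (Fin (N + 1) → Fin n → O) → ℝ)
    (j : Fin N) (U : Fin (N + 1) → Fin n → I) (Y : Fin N → Fin n → O) : ℝ :=
  ∑ X ∈ Finset.univ.filter (fun X => priorAgree j Y X), P U X

/-- The conditional box `P̃(X¹, X²_j | U¹, U²_j)` given the prior outputs `Y`. -/
def tildeJoint {O I : Type} [Fintype O] [Fintype I] {n N : ℕ}
    (P : (Fin (N + 1) → Fin n → I) → (Fin (N + 1) → Fin n → O) → ℝ)
    (j : Fin N) (U : Fin (N + 1) → Fin n → I) (Y : Fin N → Fin n → O)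
    (x1 x2 : Fin n → O) : ℝ :=
  (∑ X ∈ Finset.univ.filter
      (fun X => priorAgree j Y X ∧ X 0 = x1 ∧ X j.succ = x2), P U X)
    / priorProb P j U Y

/-- The marginal `P̃(X¹ | U¹)` of the conditional box. -/
def tildeFst {O I : Type} [Fintype O] [Fintype I] {n N : ℕ}
    (P : (Fin (N + 1) → Fin n → I) → (Fin (N + 1) → Fin n → O) → ℝ)
    (j : Fin N) (U : Fin (N + 1) → Fin n → I) (Y : Fin N → Fin n → O)
    (x1 : Fin n → O) : ℝ :=
  (∑ X ∈ Finset.univ.filter (fun X => priorAgree j Y X ∧ X 0 = x1), P U X)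
    / priorProb P j U Y

/-- The marginal `P̃(X²_j | U²_j)` of the conditional box. -/
def tildeSnd {O I : Type} [Fintype O] [Fintype I] {n N : ℕ}
    (P : (Fin (N + 1) → Fin n → I) → (Fin (N + 1) → Fin n → O) → ℝ)
    (j : Fin N) (U : Fin (N + 1) → Fin n → I) (Y : Fin N → Fin n → O)
    (x2 : Fin n → O) : ℝ :=
  (∑ X ∈ Finset.univ.filter (fun X => priorAgree j Y X ∧ X j.succ = x2), P U X)
    / priorProb P j U Y

open Finset Real InformationTheory

variable {Ω α β γ : Type*}

lemma monotoneOn_add_one_mul_log_sub :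
    MonotoneOn (fun s : ℝ => (s + 1) * log s - 2 * (s - 1)) (Set.Ioi 0) := by
  refine monotoneOn_of_hasDerivWithinAt_nonneg (f' := fun s => log s + (s + 1) * s⁻¹ - 2)
    (convex_Ioi 0) ?_ (fun s hs => ?_) (fun s hs => ?_)
  · exact ((continuousOn_id.add continuousOn_const).mul
      (continuousOn_log.mono fun s hs => ne_of_gt hs)).sub (by fun_prop)
  · rw [interior_Ioi] at hs
    exact (((((hasDerivAt_id s).add_const 1).mul (hasDerivAt_log (ne_of_gt hs))).sub
      (((hasDerivAt_id s).sub_const 1).const_mul 2)).congr_deriv (by simp)).hasDerivWithinAt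
  · rw [interior_Ioi] at hs
    have h := one_sub_inv_le_log_of_pos hs
    have : (s + 1) * s⁻¹ = 1 + s⁻¹ := by rw [add_mul, mul_inv_cancel₀ (ne_of_gt hs), one_mul]
    linarith

/-- The pointwise inequality behind Pinsker's inequality. -/
lemma three_mul_sq_sub_one_le_klFun {t : ℝ} (ht : 0 ≤ t) :
    3 * (t - 1) ^ 2 ≤ (2 * t + 4) * klFun t := by
  set φ : ℝ → ℝ := fun s => (2 * s + 4) * klFun s - 3 * (s - 1) ^ 2
  set ψ : ℝ → ℝ := fun s => (s + 1) * log s - 2 * (s - 1)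
  have hφ : Continuous φ := by unfold φ; fun_prop [continuous_klFun]
  have hφ' : ∀ s, 0 < s → HasDerivAt φ (4 * ψ s) s := fun s hs =>
    ((((hasDerivAt_id s).const_mul 2).add_const 4).mul
      (hasDerivAt_klFun (ne_of_gt hs))).sub
      ((((hasDerivAt_id s).sub_const 1).pow 2).const_mul 3) |>.congr_deriv
      (by simp only [ψ, klFun, id]; ring)
  have hψ1 : ψ 1 = 0 := by simp [ψ]
  have hφ1 : φ 1 = 0 := by simp [φ, klFun_one]
  have h1mem : (1 : ℝ) ∈ Set.Ioi 0 := Set.mem_Ioi.2 one_pos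
  suffices 0 ≤ φ t by simp only [φ] at this; linarith
  rcases le_total 1 t with h1 | h1
  · refine hφ1 ▸ monotoneOn_of_hasDerivWithinAt_nonneg (convex_Icc 1 t) hφ.continuousOn
      (fun s hs => (hφ' s ?_).hasDerivWithinAt) (fun s hs => ?_) ⟨le_rfl, h1⟩ ⟨h1, le_rfl⟩ h1
    all_goals simp only [interior_Icc, Set.mem_Ioo] at hs
    · linarith
    · have : ψ 1 ≤ ψ s := monotoneOn_add_one_mul_log_sub h1mem (by simp; linarith) hs.1.le
      linarith
  · refine hφ1 ▸ antitoneOn_of_hasDerivWithinAt_nonpos (convex_Icc t 1) hφ.continuousOn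
      (fun s hs => (hφ' s ?_).hasDerivWithinAt) (fun s hs => ?_) ⟨le_rfl, h1⟩ ⟨h1, le_rfl⟩ h1
    all_goals simp only [interior_Icc, Set.mem_Ioo] at hs
    · linarith
    · have : ψ s ≤ ψ 1 := monotoneOn_add_one_mul_log_sub (by simp; linarith) h1mem hs.2.le
      linarith

section Entropy

variable [Fintype α]

def entropy (r : α → ℝ) : ℝ := ∑ a, negMulLog (r a)

def relEntropy (u v : α → ℝ) : ℝ := ∑ a, u a * log (u a / v a)

lemma entropy_nonneg {r : α → ℝ} (h0 : ∀ a, 0 ≤ r a) (h1 : ∀ a, r a ≤ 1) : 0 ≤ entropy r :=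
  sum_nonneg fun a _ => negMulLog_nonneg (h0 a) (h1 a)

lemma negMulLog_le_mul_log_add {x K : ℝ} (hx : 0 ≤ x) (hK : 0 < K) :
    negMulLog x ≤ x * log K + (K⁻¹ - x) := by
  have h := negMulLog_le_one_sub_self (mul_nonneg hK.le hx)
  rw [negMulLog_mul, negMulLog] at h
  calc negMulLog x = K⁻¹ * (K * negMulLog x) := by field_simp
    _ ≤ K⁻¹ * (1 - K * x + x * K * log K) := by gcongr; linarith
    _ = x * log K + (K⁻¹ - x) := by field_simp; ring

lemma entropy_le_log_card {r : α → ℝ} (h0 : ∀ a, 0 ≤ r a) (h1 : ∑ a, r a = 1) :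
    entropy r ≤ log (Fintype.card α) := by
  have hK : (0 : ℝ) < Fintype.card α := by
    rcases isEmpty_or_nonempty α with hα | hα
    · simp at h1
    · exact_mod_cast Fintype.card_pos
  calc entropy r ≤ ∑ a, (r a * log (Fintype.card α) + ((Fintype.card α : ℝ)⁻¹ - r a)) :=
        sum_le_sum fun a _ => negMulLog_le_mul_log_add (h0 a) hK
    _ = log (Fintype.card α) := by
        rw [sum_add_distrib, ← sum_mul, sum_sub_distrib, h1, sum_const, card_univ, nsmul_eq_mul,
          mul_inv_cancel₀ hK.ne']
        ring

lemma mul_log_div_sub_add_eq {x y : ℝ} (hy : y ≠ 0) :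
    x * log (x / y) - x + y = y * klFun (x / y) := by
  rw [klFun]; field_simp; ring

lemma mul_log_div_sub_add_nonneg {x y : ℝ} (hx : 0 ≤ x) (hy : 0 ≤ y) (hxy : y = 0 → x = 0) :
    0 ≤ x * log (x / y) - x + y := by
  rcases hy.eq_or_lt with rfl | hy
  · simp [hxy rfl]
  · rw [mul_log_div_sub_add_eq hy.ne']
    exact mul_nonneg hy.le (klFun_nonneg (div_nonneg hx hy.le))

lemma sq_sub_le_mul_log_div {x y : ℝ} (hx : 0 ≤ x) (hy : 0 ≤ y) (hxy : y = 0 → x = 0) :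
    3 * (x - y) ^ 2 ≤ (2 * x + 4 * y) * (x * log (x / y) - x + y) := by
  rcases hy.eq_or_lt with rfl | hy
  · simp [hxy rfl]
  · have hy0 : y ≠ 0 := hy.ne'
    rw [mul_log_div_sub_add_eq hy0]
    calc 3 * (x - y) ^ 2 = y ^ 2 * (3 * (x / y - 1) ^ 2) := by field_simp
      _ ≤ y ^ 2 * ((2 * (x / y) + 4) * klFun (x / y)) := by
          gcongr y ^ 2 * ?_; exact three_mul_sq_sub_one_le_klFun (div_nonneg hx hy.le)
      _ = (2 * x + 4 * y) * (y * klFun (x / y)) := by field_simp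

/-- **Pinsker's inequality** for finitely supported distributions. -/
theorem sq_sum_abs_sub_le_two_mul_relEntropy {u v : α → ℝ} (hu : ∀ a, 0 ≤ u a)
    (hv : ∀ a, 0 ≤ v a) (hu1 : ∑ a, u a = 1) (hv1 : ∑ a, v a = 1)
    (hac : ∀ a, v a = 0 → u a = 0) :
    (∑ a, |u a - v a|) ^ 2 ≤ 2 * relEntropy u v := by
  set w : α → ℝ := fun a => (2 * u a + 4 * v a) / 3
  set g : α → ℝ := fun a => u a * log (u a / v a) - u a + v a
  have hw : ∀ a, 0 ≤ w a := fun a => by have := hu a; have := hv a; positivity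
  have hg : ∀ a, 0 ≤ g a := fun a => mul_log_div_sub_add_nonneg (hu a) (hv a) (hac a)
  have hw_sum : ∑ a, w a = 2 := by
    simp only [w, ← sum_div, sum_add_distrib, ← mul_sum, hu1, hv1]; norm_num
  have hg_sum : ∑ a, g a = relEntropy u v := by
    simp only [g, relEntropy, sum_add_distrib, sum_sub_distrib, hu1, hv1]; ring
  have hpoint : ∀ a, |u a - v a| ≤ √(w a) * √(g a) := fun a => by
    rw [← sqrt_mul (hw a), ← sqrt_sq_eq_abs]
    exact sqrt_le_sqrt (by
      have := sq_sub_le_mul_log_div (hu a) (hv a) (hac a); simp only [w, g]; nlinarith)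
  have hKL : 0 ≤ relEntropy u v := hg_sum ▸ sum_nonneg fun a _ => hg a
  calc (∑ a, |u a - v a|) ^ 2 ≤ (√(∑ a, w a) * √(∑ a, g a)) ^ 2 := by
        refine pow_le_pow_left₀ (sum_nonneg fun a _ => abs_nonneg _) ?_ 2
        exact (sum_le_sum fun a _ => hpoint a).trans (sum_sqrt_mul_sqrt_le _ hw hg)
    _ = 2 * relEntropy u v := by
        rw [mul_pow, sq_sqrt (by rw [hw_sum]; norm_num), sq_sqrt (by rw [hg_sum]; exact hKL),
          hw_sum, hg_sum]

end Entropy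

section Marginals

variable {J : α × β → ℝ} {F : α → ℝ} {S : β → ℝ}

lemma le_of_sum_snd_eq [Fintype β] (hJ : ∀ z, 0 ≤ J z) (hF : ∀ a, ∑ b, J (a, b) = F a)
    (z : α × β) : J z ≤ F z.1 :=
  hF z.1 ▸ single_le_sum (f := fun b => J (z.1, b)) (fun _ _ => hJ _) (mem_univ z.2)

lemma le_of_sum_fst_eq [Fintype α] (hJ : ∀ z, 0 ≤ J z) (hS : ∀ b, ∑ a, J (a, b) = S b)
    (z : α × β) : J z ≤ S z.2 :=
  hS z.2 ▸ single_le_sum (f := fun a => J (a, z.2)) (fun _ _ => hJ _) (mem_univ z.1)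

variable [Fintype α] [Fintype β]

lemma relEntropy_prod_marginals (hJ : ∀ z, 0 ≤ J z) (hF : ∀ a, ∑ b, J (a, b) = F a)
    (hS : ∀ b, ∑ a, J (a, b) = S b) :
    relEntropy J (fun z => F z.1 * S z.2) = entropy F + entropy S - entropy J := by
  have hterm : ∀ z : α × β, J z * log (J z / (F z.1 * S z.2))
      = -negMulLog (J z) - J z * log (F z.1) - J z * log (S z.2) := fun z => by
    rcases (hJ z).eq_or_lt with h | h
    · simp [← h]
    · have hF0 := h.trans_le (le_of_sum_snd_eq hJ hF z)
      have hS0 := h.trans_le (le_of_sum_fst_eq hJ hS z)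
      rw [log_div h.ne' (by positivity), log_mul hF0.ne' hS0.ne', negMulLog]
      ring
  have hlogF : ∑ z : α × β, J z * log (F z.1) = -entropy F := by
    simp only [Fintype.sum_prod_type, ← sum_mul, hF, entropy, negMulLog, ← sum_neg_distrib]
    ring_nf
  have hlogS : ∑ z : α × β, J z * log (S z.2) = -entropy S := by
    simp only [Fintype.sum_prod_type_right, ← sum_mul, hS, entropy, negMulLog,
      ← sum_neg_distrib]
    ring_nf
  rw [relEntropy, sum_congr rfl fun z _ => hterm z, sum_sub_distrib, sum_sub_distrib, hlogF,
    hlogS, sum_neg_distrib]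
  unfold entropy
  ring

lemma sq_sum_abs_sub_prod_marginals_le (hJ : ∀ z, 0 ≤ J z) (hJ1 : ∑ z, J z = 1)
    (hF : ∀ a, ∑ b, J (a, b) = F a) (hS : ∀ b, ∑ a, J (a, b) = S b) :
    (∑ z, |J z - F z.1 * S z.2|) ^ 2 ≤ 2 * relEntropy J (fun z => F z.1 * S z.2) := by
  have hF0 : ∀ a, 0 ≤ F a := fun a => hF a ▸ sum_nonneg fun b _ => hJ _
  have hS0 : ∀ b, 0 ≤ S b := fun b => hS b ▸ sum_nonneg fun a _ => hJ _
  have hF1 : ∑ a, F a = 1 := by simp only [← hF, ← Fintype.sum_prod_type, hJ1]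
  have hS1 : ∑ b, S b = 1 := by simp only [← hS, ← Fintype.sum_prod_type_right, hJ1]
  refine sq_sum_abs_sub_le_two_mul_relEntropy hJ (fun z => mul_nonneg (hF0 _) (hS0 _)) hJ1 ?_
    fun z hz => ?_
  · simp only [Fintype.sum_prod_type, ← sum_mul_sum, hF1, hS1, one_mul]
  · rcases mul_eq_zero.1 hz with h | h
    · exact le_antisymm (h ▸ le_of_sum_snd_eq hJ hF z) (hJ z)
    · exact le_antisymm (h ▸ le_of_sum_fst_eq hJ hS z) (hJ z)

end Marginals

section Pushforward

variable [Fintype Ω] (p : Ω → ℝ)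

def pushforward (f : Ω → α) (a : α) : ℝ := ∑ ω ∈ univ.filter (fun ω => f ω = a), p ω

variable {p}

lemma pushforward_nonneg (hp : ∀ ω, 0 ≤ p ω) (f : Ω → α) (a : α) : 0 ≤ pushforward p f a :=
  sum_nonneg fun ω _ => hp ω

variable (p)

lemma sum_pushforward [Fintype α] (f : Ω → α) : ∑ a, pushforward p f a = ∑ ω, p ω :=
  sum_fiberwise _ _ _

lemma sum_mul_pushforward [Fintype α] (f : Ω → α) (φ : α → ℝ) :
    ∑ a, pushforward p f a * φ a = ∑ ω, p ω * φ (f ω) := by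
  rw [← sum_fiberwise univ f fun ω => p ω * φ (f ω)]
  refine sum_congr rfl fun a _ => ?_
  rw [pushforward, sum_mul]
  exact sum_congr rfl fun ω hω => by rw [(mem_filter.1 hω).2]

lemma sum_pushforward_pair [Fintype α] (f : Ω → α) (h : Ω → γ) (c : γ) :
    ∑ a, pushforward p (fun ω => (f ω, h ω)) (a, c) = pushforward p h c := by
  simp only [pushforward]
  rw [sum_comm' (t' := univ.filter fun ω => h ω = c) (s' := fun ω => {f ω})]
  · simp
  · intro a ω; simp [Prod.ext_iff]; tauto

lemma sum_pushforward_triple_snd [Fintype β] (f : Ω → α) (g : Ω → β) (h : Ω → γ) (a : α)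
    (c : γ) :
    ∑ b, pushforward p (fun ω => ((f ω, g ω), h ω)) ((a, b), c)
      = pushforward p (fun ω => (f ω, h ω)) (a, c) := by
  simp only [pushforward]
  rw [sum_comm' (t' := univ.filter fun ω => (f ω, h ω) = (a, c))
    (s' := fun ω => {g ω})]
  · simp
  · intro b ω; simp [Prod.ext_iff]; tauto

lemma sum_pushforward_triple_fst [Fintype α] (f : Ω → α) (g : Ω → β) (h : Ω → γ) (b : β)
    (c : γ) :
    ∑ a, pushforward p (fun ω => ((f ω, g ω), h ω)) ((a, b), c)
      = pushforward p (fun ω => (g ω, h ω)) (b, c) := by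
  simp only [pushforward]
  rw [sum_comm' (t' := univ.filter fun ω => (g ω, h ω) = (b, c))
    (s' := fun ω => {f ω})]
  · simp
  · intro a ω; simp [Prod.ext_iff]; tauto

lemma pushforward_comp_apply {e : α → β} (he : Function.Injective e) (f : Ω → α) (a : α) :
    pushforward p (fun ω => e (f ω)) (e a) = pushforward p f a := by
  simp only [pushforward, he.eq_iff]

lemma pushforward_comp_eq_zero (e : α → β) (f : Ω → α) {b : β} (hb : b ∉ Set.range e) :
    pushforward p (fun ω => e (f ω)) b = 0 :=
  sum_eq_zero fun ω hω => absurd ⟨f ω, (mem_filter.1 hω).2⟩ hb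

lemma entropy_pushforward_comp [Fintype α] [Fintype β] {e : α → β}
    (he : Function.Injective e) (f : Ω → α) :
    entropy (pushforward p fun ω => e (f ω)) = entropy (pushforward p f) :=
  (Fintype.sum_of_injective e he _ _
    (fun b hb => by rw [pushforward_comp_eq_zero p e f hb, negMulLog_zero])
    (fun a => by rw [pushforward_comp_apply p he])).symm

end Pushforward

lemma sum_mul_sqrt_le_sqrt_sum_mul {ι : Type*} [Fintype ι] {w x : ι → ℝ} (hw : ∀ i, 0 ≤ w i)
    (hw1 : ∑ i, w i = 1) (hx : ∀ i, 0 ≤ x i) : ∑ i, w i * √(x i) ≤ √(∑ i, w i * x i) :=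
  strictConcaveOn_sqrt.concaveOn.le_map_sum (fun i _ => hw i) hw1 fun i _ => hx i

section Conditional

variable [Fintype Ω] (p : Ω → ℝ)

-- The junk value `x / 0 = 0` makes this vanish on the `c` of probability zero.
def condPushforward (f : Ω → α) (h : Ω → γ) (c : γ) (a : α) : ℝ :=
  pushforward p (fun ω => (f ω, h ω)) (a, c) / pushforward p h c

def condEntropy [Fintype α] [Fintype γ] (f : Ω → α) (h : Ω → γ) : ℝ :=
  entropy (pushforward p fun ω => (f ω, h ω)) - entropy (pushforward p h)

def condMutualInfo [Fintype α] [Fintype β] [Fintype γ] (f : Ω → α) (g : Ω → β) (h : Ω → γ) :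
    ℝ :=
  condEntropy p f h - condEntropy p f fun ω => (g ω, h ω)

variable {p}

lemma condPushforward_nonneg (hp : ∀ ω, 0 ≤ p ω) (f : Ω → α) (h : Ω → γ) (c : γ) (a : α) :
    0 ≤ condPushforward p f h c a :=
  div_nonneg (pushforward_nonneg hp _ _) (pushforward_nonneg hp _ _)

lemma condPushforward_le_one [Fintype α] (hp : ∀ ω, 0 ≤ p ω) (f : Ω → α) (h : Ω → γ) (c : γ)
    (a : α) : condPushforward p f h c a ≤ 1 :=
  div_le_one_of_le₀ (sum_pushforward_pair p f h c ▸
    single_le_sum (f := fun a => pushforward p (fun ω => (f ω, h ω)) (a, c))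
      (fun _ _ => pushforward_nonneg hp _ _) (mem_univ a)) (pushforward_nonneg hp _ _)

lemma sum_condPushforward [Fintype α] (f : Ω → α) (h : Ω → γ) {c : γ}
    (hc : pushforward p h c ≠ 0) : ∑ a, condPushforward p f h c a = 1 := by
  simp only [condPushforward, ← sum_div, sum_pushforward_pair, div_self hc]

lemma sum_condPushforward_pair_snd [Fintype β] (f : Ω → α) (g : Ω → β) (h : Ω → γ) (c : γ)
    (a : α) :
    ∑ b, condPushforward p (fun ω => (f ω, g ω)) h c (a, b) = condPushforward p f h c a := by
  simp only [condPushforward, ← sum_div, sum_pushforward_triple_snd]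

lemma sum_condPushforward_pair_fst [Fintype α] (f : Ω → α) (g : Ω → β) (h : Ω → γ) (c : γ)
    (b : β) :
    ∑ a, condPushforward p (fun ω => (f ω, g ω)) h c (a, b) = condPushforward p g h c b := by
  simp only [condPushforward, ← sum_div, sum_pushforward_triple_fst]

lemma sq_sum_abs_condPushforward_sub_le [Fintype α] [Fintype β] (hp : ∀ ω, 0 ≤ p ω)
    (f : Ω → α) (g : Ω → β) (h : Ω → γ) {c : γ} (hc : pushforward p h c ≠ 0) :
    (∑ z, |condPushforward p (fun ω => (f ω, g ω)) h c z
        - condPushforward p f h c z.1 * condPushforward p g h c z.2|) ^ 2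
      ≤ 2 * relEntropy (condPushforward p (fun ω => (f ω, g ω)) h c)
        (fun z => condPushforward p f h c z.1 * condPushforward p g h c z.2) :=
  sq_sum_abs_sub_prod_marginals_le (condPushforward_nonneg hp _ h c)
    (sum_condPushforward _ h hc) (sum_condPushforward_pair_snd f g h c)
    (sum_condPushforward_pair_fst f g h c)

lemma relEntropy_condPushforward_nonneg [Fintype α] [Fintype β] (hp : ∀ ω, 0 ≤ p ω)
    (f : Ω → α) (g : Ω → β) (h : Ω → γ) (c : γ) :
    0 ≤ relEntropy (condPushforward p (fun ω => (f ω, g ω)) h c)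
      (fun z => condPushforward p f h c z.1 * condPushforward p g h c z.2) := by
  rcases (pushforward_nonneg hp h c).eq_or_lt with hc | hc
  · simp [relEntropy, condPushforward, ← hc]
  · linarith [(sq_nonneg _).trans (sq_sum_abs_condPushforward_sub_le hp f g h hc.ne')]

variable [Fintype α] [Fintype β] [Fintype γ]

lemma condEntropy_eq_sum (hp : ∀ ω, 0 ≤ p ω) (f : Ω → α) (h : Ω → γ) :
    condEntropy p f h = ∑ c, pushforward p h c * entropy (condPushforward p f h c) := by
  have hterm : ∀ c, pushforward p h c * entropy (condPushforward p f h c)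
      = ∑ a, negMulLog (pushforward p (fun ω => (f ω, h ω)) (a, c))
        - negMulLog (pushforward p h c) := fun c => by
    rcases (pushforward_nonneg hp h c).eq_or_lt with hc | hc
    · have hzero : ∀ a, pushforward p (fun ω => (f ω, h ω)) (a, c) = 0 := fun a =>
        (sum_eq_zero_iff_of_nonneg fun a _ => pushforward_nonneg hp _ (a, c)).1
          (by rw [sum_pushforward_pair, ← hc]) a (mem_univ a)
      simp [← hc, hzero]
    · have hsplit : ∀ a, pushforward p (fun ω => (f ω, h ω)) (a, c)
          = pushforward p h c * condPushforward p f h c a := fun a => by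
        rw [condPushforward, mul_div_cancel₀ _ hc.ne']
      simp only [hsplit, negMulLog_mul, sum_add_distrib, ← sum_mul, ← mul_sum,
        sum_condPushforward f h hc.ne', entropy]
      ring
  rw [condEntropy, sum_congr rfl fun c _ => hterm c, sum_sub_distrib, entropy, entropy,
    Fintype.sum_prod_type_right]

lemma condEntropy_nonneg (hp : ∀ ω, 0 ≤ p ω) (f : Ω → α) (h : Ω → γ) :
    0 ≤ condEntropy p f h :=
  condEntropy_eq_sum hp f h ▸ sum_nonneg fun c _ => mul_nonneg (pushforward_nonneg hp h c)
    (entropy_nonneg (condPushforward_nonneg hp f h c) (condPushforward_le_one hp f h c))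

lemma condEntropy_le_log_card (hp : ∀ ω, 0 ≤ p ω) (hp1 : ∑ ω, p ω = 1) (f : Ω → α)
    (h : Ω → γ) : condEntropy p f h ≤ log (Fintype.card α) := by
  calc condEntropy p f h ≤ ∑ c, pushforward p h c * log (Fintype.card α) := by
        rw [condEntropy_eq_sum hp]
        refine sum_le_sum fun c _ => ?_
        rcases (pushforward_nonneg hp h c).eq_or_lt with hc | hc
        · simp [← hc]
        · exact mul_le_mul_of_nonneg_left (entropy_le_log_card (condPushforward_nonneg hp f h c)
            (sum_condPushforward f h hc.ne')) hc.le
    _ = log (Fintype.card α) := by rw [← sum_mul, sum_pushforward, hp1, one_mul]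

lemma condEntropy_comp {δ : Type*} [Fintype δ] {e : γ → δ} (he : Function.Injective e)
    (f : Ω → α) (h : Ω → γ) : condEntropy p f (fun ω => e (h ω)) = condEntropy p f h := by
  have hpair : Function.Injective (Prod.map id e : α × γ → α × δ) :=
    Function.Injective.prodMap Function.injective_id he
  rw [condEntropy, condEntropy, entropy_pushforward_comp p he,
    ← entropy_pushforward_comp p hpair]
  rfl

lemma condEntropy_pair (f : Ω → α) (g : Ω → β) (h : Ω → γ) :
    condEntropy p f (fun ω => (g ω, h ω))
      = condEntropy p (fun ω => (f ω, g ω)) h - condEntropy p g h := by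
  have hassoc := entropy_pushforward_comp p (Equiv.prodAssoc α β γ).injective
    fun ω => ((f ω, g ω), h ω)
  simp only [condEntropy]
  rw [← hassoc]
  simp only [Equiv.prodAssoc_apply]
  ring

lemma condMutualInfo_eq_sum_relEntropy (hp : ∀ ω, 0 ≤ p ω) (f : Ω → α) (g : Ω → β)
    (h : Ω → γ) :
    condMutualInfo p f g h = ∑ c, pushforward p h c *
      relEntropy (condPushforward p (fun ω => (f ω, g ω)) h c)
        (fun z => condPushforward p f h c z.1 * condPushforward p g h c z.2) := by
  rw [condMutualInfo, condEntropy_pair, condEntropy_eq_sum hp, condEntropy_eq_sum hp,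
    condEntropy_eq_sum hp, ← sum_sub_distrib, ← sum_sub_distrib]
  refine sum_congr rfl fun c _ => ?_
  rw [relEntropy_prod_marginals (condPushforward_nonneg hp _ h c)
    (sum_condPushforward_pair_snd f g h c) (sum_condPushforward_pair_fst f g h c)]
  ring

lemma condMutualInfo_nonneg (hp : ∀ ω, 0 ≤ p ω) (f : Ω → α) (g : Ω → β) (h : Ω → γ) :
    0 ≤ condMutualInfo p f g h :=
  condMutualInfo_eq_sum_relEntropy hp f g h ▸ sum_nonneg fun c _ =>
    mul_nonneg (pushforward_nonneg hp h c) (relEntropy_condPushforward_nonneg hp f g h c)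

theorem sum_mul_sum_abs_condPushforward_sub_le (hp : ∀ ω, 0 ≤ p ω) (hp1 : ∑ ω, p ω = 1)
    (f : Ω → α) (g : Ω → β) (h : Ω → γ) :
    ∑ c, pushforward p h c * ∑ z, |condPushforward p (fun ω => (f ω, g ω)) h c z
        - condPushforward p f h c z.1 * condPushforward p g h c z.2|
      ≤ √(2 * condMutualInfo p f g h) := by
  set D : γ → ℝ := fun c => relEntropy (condPushforward p (fun ω => (f ω, g ω)) h c)
    (fun z => condPushforward p f h c z.1 * condPushforward p g h c z.2)
  calc _ ≤ ∑ c, pushforward p h c * √(2 * D c) := sum_le_sum fun c _ => by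
        rcases (pushforward_nonneg hp h c).eq_or_lt with hc | hc
        · rw [← hc, zero_mul, zero_mul]
        · exact mul_le_mul_of_nonneg_left
            (le_sqrt_of_sq_le (sq_sum_abs_condPushforward_sub_le hp f g h hc.ne')) hc.le
    _ ≤ √(∑ c, pushforward p h c * (2 * D c)) :=
        sum_mul_sqrt_le_sqrt_sum_mul (pushforward_nonneg hp h) (by rw [sum_pushforward, hp1])
          fun c => mul_nonneg zero_le_two (relEntropy_condPushforward_nonneg hp f g h c)
    _ = √(2 * condMutualInfo p f g h) := by
        rw [condMutualInfo_eq_sum_relEntropy hp, mul_sum]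
        simp only [D, mul_left_comm]

end Conditional

section Chain

variable {N : ℕ}

def prefixRecord (g : Fin N → Ω → β) (t : ℕ) (ω : Ω) : Fin N → Option β :=
  fun k => if (k : ℕ) < t then some (g k ω) else none

lemma injective_apply_update_none (j : Fin N) :
    Function.Injective fun r : Fin N → Option β => (r j, Function.update r j none) :=
  Function.LeftInverse.injective (g := fun x => Function.update x.2 j x.1) fun r => by simp

lemma prefixRecord_succ (g : Fin N → Ω → β) (j : Fin N) (ω : Ω) :
    (prefixRecord g (j + 1) ω j, Function.update (prefixRecord g (j + 1) ω) j none)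
      = (some (g j ω), prefixRecord g j ω) := by
  refine Prod.ext (by simp [prefixRecord]) (funext fun k => ?_)
  rcases eq_or_ne k j with rfl | hk
  · simp [prefixRecord]
  · simp only [Function.update_of_ne hk, prefixRecord]
    have : (k : ℕ) ≠ j := fun h => hk (Fin.ext h)
    split_ifs <;> first | rfl | omega

variable [Fintype Ω] {p : Ω → ℝ}

lemma condEntropy_prefixRecord_succ [Fintype α] [Fintype β] (f : Ω → α)
    (g : Fin N → Ω → β) (j : Fin N) :
    condEntropy p f (prefixRecord g (j + 1))
      = condEntropy p f fun ω => (g j ω, prefixRecord g j ω) := by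
  have hsome : Function.Injective (Prod.map some id : β × (Fin N → Option β) → _) :=
    (Option.some_injective β).prodMap Function.injective_id
  rw [← condEntropy_comp (injective_apply_update_none j), ← condEntropy_comp hsome]
  simp only [prefixRecord_succ]
  rfl

theorem sum_condMutualInfo_prefixRecord_le [Fintype α] [Fintype β] (hp : ∀ ω, 0 ≤ p ω)
    (hp1 : ∑ ω, p ω = 1) (f : Ω → α) (g : Fin N → Ω → β) :
    ∑ j : Fin N, condMutualInfo p f (g j) (prefixRecord g j) ≤ log (Fintype.card α) := by
  set H : ℕ → ℝ := fun t => condEntropy p f (prefixRecord g t)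
  have htel : ∀ j : Fin N, condMutualInfo p f (g j) (prefixRecord g j) = H j - H (j + 1) :=
    fun j => by simp only [H, condMutualInfo, condEntropy_prefixRecord_succ]
  rw [sum_congr rfl fun j _ => htel j, Fin.sum_univ_eq_sum_range (fun t => H t - H (t + 1)),
    sum_range_sub']
  linarith [condEntropy_le_log_card hp hp1 f (prefixRecord g 0),
    condEntropy_nonneg hp f (prefixRecord g N)]

end Chain

lemma sum_mul_le_mul_of_le_mul_sum {ι κ : Type*} [Fintype ι] [Fintype κ] {ν F : ι × κ → ℝ}
    {c B : ℝ} (hν0 : ∀ a, 0 ≤ ν a) (hν1 : ∑ a, ν a = 1) (hc : 0 ≤ c)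
    (hνc : ∀ j U, ν (j, U) ≤ c * ∑ j', ν (j', U)) (hF0 : ∀ a, 0 ≤ F a)
    (hF : ∀ U, ∑ j, F (j, U) ≤ B) :
    ∑ a, ν a * F a ≤ c * B := by
  have hw : ∀ U, 0 ≤ c * ∑ j', ν (j', U) := fun U =>
    mul_nonneg hc (sum_nonneg fun j' _ => hν0 _)
  calc ∑ a, ν a * F a = ∑ U, ∑ j, ν (j, U) * F (j, U) := Fintype.sum_prod_type_right _
    _ ≤ ∑ U, ∑ j, (c * ∑ j', ν (j', U)) * F (j, U) :=
        sum_le_sum fun U _ => sum_le_sum fun j _ =>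
          mul_le_mul_of_nonneg_right (hνc j U) (hF0 _)
    _ = ∑ U, (c * ∑ j', ν (j', U)) * ∑ j, F (j, U) := by simp only [mul_sum]
    _ ≤ ∑ U, (c * ∑ j', ν (j', U)) * B :=
        sum_le_sum fun U _ => mul_le_mul_of_nonneg_left (hF U) (hw U)
    _ = c * B := by rw [← sum_mul, ← mul_sum, ← Fintype.sum_prod_type_right, hν1, mul_one]

lemma two_mul_log_two_mul_rpow_logb_div_eq (m n : ℕ) (K : ℝ) {ε : ℝ} (hε : 0 < 1 + 2 * ε) :
    2 * log 2 * (((2 ^ m : ℕ) : ℝ) ^ logb 2 (1 + 2 * ε)) * (n * logb 2 K) / ((2 ^ m : ℕ) : ℝ)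
      = 2 * ((1 / 2 + ε) ^ m * (n * log K)) := by
  have hpow : ((2 ^ m : ℕ) : ℝ) ^ logb 2 (1 + 2 * ε) = (1 + 2 * ε) ^ m := by
    rw [Nat.cast_pow, Nat.cast_ofNat, ← rpow_natCast, ← rpow_mul zero_le_two, mul_comm,
      rpow_mul zero_le_two, rpow_logb zero_lt_two (by norm_num) hε, rpow_natCast]
  have hlog2 : log 2 ≠ 0 := (log_pos one_lt_two).ne'
  rw [hpow, logb, show (1 / 2 + ε : ℝ) = (1 + 2 * ε) / 2 by ring, div_pow]
  push_cast
  field_simp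

section Application

variable {O I : Type} {n N : ℕ}

def secondBlock {β : Type*} (k : Fin N) (X : Fin (N + 1) → β) : β := X k.succ

lemma priorAgree_iff (j : Fin N) (X₀ X : Fin (N + 1) → Fin n → O) :
    priorAgree j (fun k => X₀ k.succ) X
      ↔ prefixRecord secondBlock j X = prefixRecord secondBlock j X₀ := by
  rw [priorAgree, funext_iff]
  refine forall_congr' fun k => ?_
  simp only [prefixRecord, secondBlock, Fin.lt_def]
  split_ifs <;> simp [*]

variable [Fintype O] [Fintype I]
  (P : (Fin (N + 1) → Fin n → I) → (Fin (N + 1) → Fin n → O) → ℝ) (j : Fin N)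
  (U : Fin (N + 1) → Fin n → I) (X₀ : Fin (N + 1) → Fin n → O)

lemma priorProb_eq_pushforward :
    priorProb P j U (fun k => X₀ k.succ)
      = pushforward (P U) (prefixRecord secondBlock j) (prefixRecord secondBlock j X₀) := by
  unfold priorProb pushforward
  congr 1
  ext X
  simp [priorAgree_iff]

lemma tildeJoint_eq_condPushforward (x₁ x₂ : Fin n → O) :
    tildeJoint P j U (fun k => X₀ k.succ) x₁ x₂
      = condPushforward (P U) (fun X => (X 0, secondBlock j X)) (prefixRecord secondBlock j)
          (prefixRecord secondBlock j X₀) (x₁, x₂) := by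
  simp only [tildeJoint, condPushforward, priorProb_eq_pushforward]
  simp only [pushforward, priorAgree_iff, Prod.ext_iff, secondBlock]
  congr 1
  exact sum_congr (filter_congr fun X _ => by tauto) fun _ _ => rfl

lemma tildeFst_eq_condPushforward (x₁ : Fin n → O) :
    tildeFst P j U (fun k => X₀ k.succ) x₁
      = condPushforward (P U) (fun X => X 0) (prefixRecord secondBlock j)
          (prefixRecord secondBlock j X₀) x₁ := by
  simp only [tildeFst, condPushforward, priorProb_eq_pushforward]
  simp only [pushforward, priorAgree_iff, Prod.ext_iff]
  congr 1
  exact sum_congr (filter_congr fun X _ => by tauto) fun _ _ => rfl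

lemma tildeSnd_eq_condPushforward (x₂ : Fin n → O) :
    tildeSnd P j U (fun k => X₀ k.succ) x₂
      = condPushforward (P U) (secondBlock j) (prefixRecord secondBlock j)
          (prefixRecord secondBlock j X₀) x₂ := by
  simp only [tildeSnd, condPushforward, priorProb_eq_pushforward]
  simp only [pushforward, priorAgree_iff, Prod.ext_iff, secondBlock]
  congr 1
  exact sum_congr (filter_congr fun X _ => by tauto) fun _ _ => rfl

lemma sum_mul_sum_abs_tildeJoint_sub_le (hP0 : ∀ U X, 0 ≤ P U X) (hP1 : ∀ U, ∑ X, P U X = 1) :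
    ∑ X, P U X * ∑ x₁, ∑ x₂,
        |tildeJoint P j U (fun k => X k.succ) x₁ x₂
          - tildeFst P j U (fun k => X k.succ) x₁ * tildeSnd P j U (fun k => X k.succ) x₂|
      ≤ √(2 * condMutualInfo (P U) (fun X => X 0) (secondBlock j)
          (prefixRecord secondBlock j)) := by
  simp only [tildeJoint_eq_condPushforward, tildeFst_eq_condPushforward,
    tildeSnd_eq_condPushforward, ← Fintype.sum_prod_type', Prod.mk.eta]
  refine Eq.trans_le ?_ (sum_mul_sum_abs_condPushforward_sub_le (hP0 U) (hP1 U) (fun X => X 0)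
    (secondBlock j) (prefixRecord secondBlock j))
  rw [sum_mul_pushforward]

end Application

theorem stmt_5_general {O I : Type} [Fintype O] [Fintype I] (n m : ℕ)
    (N : ℕ) (hN : N = 2 ^ m)
    (ε : ℝ) (hε0 : 0 ≤ ε)
    (P : (Fin (N + 1) → Fin n → I) → (Fin (N + 1) → Fin n → O) → ℝ)
    (hP0 : ∀ U X, 0 ≤ P U X) (hP1 : ∀ U, ∑ X, P U X = 1)
    -- `ν` is the distribution of the block choice and the inputs, drawn from the SV source
    (ν : Fin N × (Fin (N + 1) → Fin n → I) → ℝ)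
    (hν0 : ∀ a, 0 ≤ ν a) (hν1 : ∑ a, ν a = 1)
    -- `ν(j | U) ≤ (1/2 + ε)^{log₂ N}` (as for `m = log₂ N` bits of an ε-SV source)
    (hνSV : ∀ (j : Fin N) (U : Fin (N + 1) → Fin n → I),
      ν (j, U) ≤ (1 / 2 + ε) ^ m * ∑ j' : Fin N, ν (j', U)) :
    ∑ a : Fin N × (Fin (N + 1) → Fin n → I), ν a *
        ∑ X : Fin (N + 1) → Fin n → O, P a.2 X *
          ∑ x1 : Fin n → O, ∑ x2 : Fin n → O,
            |tildeJoint P a.1 a.2 (fun k => X k.succ) x1 x2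
              - tildeFst P a.1 a.2 (fun k => X k.succ) x1
                * tildeSnd P a.1 a.2 (fun k => X k.succ) x2|
      ≤ Real.sqrt (2 * Real.log 2 * ((N : ℝ) ^ Real.logb 2 (1 + 2 * ε))
          * ((n : ℝ) * Real.logb 2 (Fintype.card O)) / (N : ℝ)) := by
  subst hN
  set info : Fin (2 ^ m) × (Fin (2 ^ m + 1) → Fin n → I) → ℝ := fun a =>
    condMutualInfo (P a.2) (fun X => X 0) (secondBlock a.1) (prefixRecord secondBlock a.1)
  have hinfo0 : ∀ a, 0 ≤ info a := fun a => condMutualInfo_nonneg (hP0 a.2) _ _ _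
  have hchain : ∀ U, ∑ j, info (j, U) ≤ n * log (Fintype.card O) := fun U => by
    simpa [Fintype.card_fun, log_pow] using
      sum_condMutualInfo_prefixRecord_le (hP0 U) (hP1 U) (fun X => X 0) secondBlock
  calc _ ≤ ∑ a, ν a * √(2 * info a) := sum_le_sum fun a _ => mul_le_mul_of_nonneg_left
        (sum_mul_sum_abs_tildeJoint_sub_le P a.1 a.2 hP0 hP1) (hν0 a)
    _ ≤ √(∑ a, ν a * (2 * info a)) :=
        sum_mul_sqrt_le_sqrt_sum_mul hν0 hν1 fun a => mul_nonneg zero_le_two (hinfo0 a)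
    _ ≤ √(2 * ((1 / 2 + ε) ^ m * (n * log (Fintype.card O)))) := by
        refine sqrt_le_sqrt ?_
        simp only [mul_left_comm _ (2 : ℝ), ← mul_sum]
        exact mul_le_mul_of_nonneg_left (sum_mul_le_mul_of_le_mul_sum hν0 hν1 (by positivity)
          hνSV hinfo0 hchain) zero_le_two
    _ = _ := by rw [two_mul_log_two_mul_rpow_logb_div_eq m n _ (by linarith)]

/-- de Finetti bound with limited randomness: selecting (via an ε-SV
source) one of `N = 2^m` blocks of the second device makes it approximately
uncorrelated with the first device, on average over the prior outputs. -/
theorem stmt_5 {O I : Type} [Fintype O] [Fintype I] (n m : ℕ) (hn : 1 ≤ n) (hm : 1 ≤ m)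
    (N : ℕ) (hN : N = 2 ^ m)
    (ε : ℝ) (hε0 : 0 ≤ ε) (hε : ε < 1 / 2)
    (P : (Fin (N + 1) → Fin n → I) → (Fin (N + 1) → Fin n → O) → ℝ)
    (hP0 : ∀ U X, 0 ≤ P U X) (hP1 : ∀ U, ∑ X, P U X = 1)
    -- no-signaling between the `N + 1` blocks
    (hNS : ∀ (S : Finset (Fin (N + 1))) (U U' : Fin (N + 1) → Fin n → I),
      (∀ b ∈ S, U b = U' b) → ∀ Xs : Fin (N + 1) → Fin n → O,
        (∑ X ∈ Finset.univ.filter (fun X => ∀ b ∈ S, X b = Xs b), P U X)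
          = (∑ X ∈ Finset.univ.filter (fun X => ∀ b ∈ S, X b = Xs b), P U' X))
    -- `ν` is the distribution of the block choice and the inputs, drawn from the SV source
    (ν : Fin N × (Fin (N + 1) → Fin n → I) → ℝ)
    (hν0 : ∀ a, 0 ≤ ν a) (hν1 : ∑ a, ν a = 1)
    -- `ν(j | U) ≤ (1/2 + ε)^{log₂ N}` (as for `m = log₂ N` bits of an ε-SV source)
    (hνSV : ∀ (j : Fin N) (U : Fin (N + 1) → Fin n → I),
      ν (j, U) ≤ (1 / 2 + ε) ^ m * ∑ j' : Fin N, ν (j', U)) :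
    ∑ a : Fin N × (Fin (N + 1) → Fin n → I), ν a *
        ∑ X : Fin (N + 1) → Fin n → O, P a.2 X *
          ∑ x1 : Fin n → O, ∑ x2 : Fin n → O,
            |tildeJoint P a.1 a.2 (fun k => X k.succ) x1 x2
              - tildeFst P a.1 a.2 (fun k => X k.succ) x1
                * tildeSnd P a.1 a.2 (fun k => X k.succ) x2|
      ≤ Real.sqrt (2 * Real.log 2 * ((N : ℝ) ^ Real.logb 2 (1 + 2 * ε))
          * ((n : ℝ) * Real.logb 2 (Fintype.card O)) / (N : ℝ)) :=
  stmt_5_general n m N hN ε hε0 P hP0 hP1 ν hν0 hν1 hνSV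
end
end

section
/- Let {p_w}_{w ∈ W} be a family of probability distributions over tuples (x, z, u, t, e) with values in finite sets, indexed by a finite set W, and suppose that the marginal p_w(x, u, e) = p(x, u, e) is independent of w. Let ACC be a set of pairs (x, u) with p(ACC) > 0 (conditioning on ACC means conditioning on the event {(x,u) ∈ ACC}), let S be a finite set, and let s = s(x, t) be a function of (x, t) with values in S. Define d_comp := Σ_{s ∈ S, e} max_{w ∈ W} Σ_z | p_w(s, z, e | ACC) − (1/|S|) p_w(z, e | ACC) | and d′ := Σ_e p(e | ACC) max_{w ∈ W} Σ_{z,u} p_w(z, u | e, ACC) Σ_{s ∈ S} | p_w(s | z, u, e, ACC) − 1/|S| |. Then d_comp ≤ |S| · d′. -/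
open Classical

noncomputable section

variable {W X Z U T E S : Type}

/-- probability of the acceptance event under `p w` -/
def pACC [Fintype X] [Fintype Z] [Fintype U] [Fintype T] [Fintype E]
    (p : W → X → Z → U → T → E → ℝ) (ACC : Finset (X × U)) (w : W) : ℝ :=
  ∑ x, ∑ z, ∑ u, ∑ t, ∑ e, if (x, u) ∈ ACC then p w x z u t e else 0

/-- `p_w(s, z, e | ACC)` where `s` is the value of the hash `sf(x,t)` -/
def pSZE [Fintype X] [Fintype Z] [Fintype U] [Fintype T] [Fintype E]
    (p : W → X → Z → U → T → E → ℝ) (ACC : Finset (X × U)) (sf : X → T → S)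
    (w : W) (s : S) (z : Z) (e : E) : ℝ :=
  (∑ x, ∑ u, ∑ t, if (x, u) ∈ ACC ∧ sf x t = s then p w x z u t e else 0) / pACC p ACC w

/-- `p_w(z, e | ACC)` -/
def pZE [Fintype X] [Fintype Z] [Fintype U] [Fintype T] [Fintype E]
    (p : W → X → Z → U → T → E → ℝ) (ACC : Finset (X × U))
    (w : W) (z : Z) (e : E) : ℝ :=
  (∑ x, ∑ u, ∑ t, if (x, u) ∈ ACC then p w x z u t e else 0) / pACC p ACC w

/-- `p_w(z, u | e, ACC)` -/
def pZUcondE [Fintype X] [Fintype Z] [Fintype U] [Fintype T] [Fintype E]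
    (p : W → X → Z → U → T → E → ℝ) (ACC : Finset (X × U))
    (w : W) (z : Z) (u : U) (e : E) : ℝ :=
  (∑ x, ∑ t, if (x, u) ∈ ACC then p w x z u t e else 0)
    / (∑ x, ∑ z', ∑ u', ∑ t, if (x, u') ∈ ACC then p w x z' u' t e else 0)

/-- `p_w(s | z, u, e, ACC)` -/
def pScond [Fintype X] [Fintype Z] [Fintype U] [Fintype T] [Fintype E]
    (p : W → X → Z → U → T → E → ℝ) (ACC : Finset (X × U)) (sf : X → T → S)
    (w : W) (s : S) (z : Z) (u : U) (e : E) : ℝ :=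
  (∑ x, ∑ t, if (x, u) ∈ ACC ∧ sf x t = s then p w x z u t e else 0)
    / (∑ x, ∑ t, if (x, u) ∈ ACC then p w x z u t e else 0)

/-- `p(e | ACC)`, computed from `p w` (by the marginal hypothesis it does not depend
on `w`) -/
def pEcond [Fintype X] [Fintype Z] [Fintype U] [Fintype T] [Fintype E]
    (p : W → X → Z → U → T → E → ℝ) (ACC : Finset (X × U)) (w : W) (e : E) : ℝ :=
  (∑ x, ∑ z, ∑ u, ∑ t, if (x, u) ∈ ACC then p w x z u t e else 0) / pACC p ACC w

/-!
Write `A = p_w(s,z,u,e,ACC)` and `C = p_w(z,u,e,ACC)` for the unnormalized masses and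
`dev_w(e) = ∑_{z,u,s} |A - C/|S||`. In the `e`-term of `d′` the normalizations by
`p_w(z,u | e,ACC)` and `p(e | ACC)` cancel (the latter is independent of `w` by the marginal
hypothesis), leaving exactly `p(e | ACC) max_w … = max_w dev_w(e) / p_w(ACC)`. In `d_comp`, the
triangle inequality over `u` and bounding one value of `s` by the sum over all of them give
`∑_z |p_w(s,z,e | ACC) - p_w(z,e | ACC)/|S|| ≤ dev_w(e) / p_w(ACC)` for every `s`; maximizing
separately for each of the `|S|` values of `s` costs the factor `|S|`.
-/

lemma mul_abs_div_sub {a c : ℝ} (k : ℝ) (hc : 0 ≤ c) (ha : c = 0 → a = 0) :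
    c * |a / c - k| = |a - c * k| := by
  rw [← abs_of_nonneg hc, ← abs_mul, abs_of_nonneg hc, mul_sub, mul_div_cancel_of_imp' ha]

section Deviation

variable (p : W → X → Z → U → T → E → ℝ) (ACC : Finset (X × U)) (sf : X → T → S)

/-- The unnormalized mass `p_w(s, z, u, e, ACC)`; `accZUE` and `accE` below are its marginals. -/
def accSZUE [Fintype X] [Fintype T] (w : W) (s : S) (z : Z) (u : U) (e : E) : ℝ :=
  ∑ x, ∑ t, if (x, u) ∈ ACC ∧ sf x t = s then p w x z u t e else 0

def accZUE [Fintype X] [Fintype T] (w : W) (z : Z) (u : U) (e : E) : ℝ :=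
  ∑ x, ∑ t, if (x, u) ∈ ACC then p w x z u t e else 0

def accE [Fintype X] [Fintype Z] [Fintype U] [Fintype T] (w : W) (e : E) : ℝ :=
  ∑ x, ∑ z, ∑ u, ∑ t, if (x, u) ∈ ACC then p w x z u t e else 0

def accDeviation [Fintype X] [Fintype Z] [Fintype U] [Fintype T] [Fintype S] (k : ℝ) (w : W)
    (e : E) : ℝ :=
  ∑ z, ∑ u, ∑ s, |accSZUE p ACC sf w s z u e - accZUE p ACC w z u e * k|

variable {p}

lemma accSZUE_nonneg [Fintype X] [Fintype T] (hp0 : ∀ w x z u t e, 0 ≤ p w x z u t e) (w : W)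
    (s : S) (z : Z) (u : U) (e : E) : 0 ≤ accSZUE p ACC sf w s z u e :=
  Finset.sum_nonneg fun x _ => Finset.sum_nonneg fun t _ => by split_ifs <;> simp [hp0]

lemma accZUE_nonneg [Fintype X] [Fintype T] (hp0 : ∀ w x z u t e, 0 ≤ p w x z u t e) (w : W)
    (z : Z) (u : U) (e : E) : 0 ≤ accZUE p ACC w z u e :=
  Finset.sum_nonneg fun x _ => Finset.sum_nonneg fun t _ => by split_ifs <;> simp [hp0]

lemma accSZUE_le_accZUE [Fintype X] [Fintype T] (hp0 : ∀ w x z u t e, 0 ≤ p w x z u t e)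
    (w : W) (s : S) (z : Z) (u : U) (e : E) :
    accSZUE p ACC sf w s z u e ≤ accZUE p ACC w z u e :=
  Finset.sum_le_sum fun x _ => Finset.sum_le_sum fun t _ => by split_ifs <;> simp_all

lemma accSZUE_eq_zero_of_accZUE_eq_zero [Fintype X] [Fintype T]
    (hp0 : ∀ w x z u t e, 0 ≤ p w x z u t e) {w : W} (s : S) {z : Z} {u : U} {e : E}
    (h : accZUE p ACC w z u e = 0) : accSZUE p ACC sf w s z u e = 0 :=
  le_antisymm (h ▸ accSZUE_le_accZUE ACC sf hp0 w s z u e) (accSZUE_nonneg ACC sf hp0 w s z u e)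

lemma accE_eq_sum_accZUE [Fintype X] [Fintype Z] [Fintype U] [Fintype T] (w : W) (e : E) :
    accE p ACC w e = ∑ z, ∑ u, accZUE p ACC w z u e := by
  unfold accE accZUE
  rw [Finset.sum_comm]
  exact Finset.sum_congr rfl fun z _ => Finset.sum_comm

lemma accE_nonneg [Fintype X] [Fintype Z] [Fintype U] [Fintype T]
    (hp0 : ∀ w x z u t e, 0 ≤ p w x z u t e) (w : W) (e : E) : 0 ≤ accE p ACC w e := by
  rw [accE_eq_sum_accZUE]
  exact Finset.sum_nonneg fun z _ => Finset.sum_nonneg fun u _ => accZUE_nonneg ACC hp0 w z u e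

lemma pACC_eq_sum_accE [Fintype X] [Fintype Z] [Fintype U] [Fintype T] [Fintype E] (w : W) :
    pACC p ACC w = ∑ e, accE p ACC w e := by
  unfold pACC accE
  simp only [Finset.sum_comm (γ := E)]

lemma pACC_nonneg [Fintype X] [Fintype Z] [Fintype U] [Fintype T] [Fintype E]
    (hp0 : ∀ w x z u t e, 0 ≤ p w x z u t e) (w : W) : 0 ≤ pACC p ACC w := by
  rw [pACC_eq_sum_accE]
  exact Finset.sum_nonneg fun e _ => accE_nonneg ACC hp0 w e

lemma pEcond_eq [Fintype X] [Fintype Z] [Fintype U] [Fintype T] [Fintype E] (w : W) (e : E) :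
    pEcond p ACC w e = accE p ACC w e / pACC p ACC w :=
  rfl

lemma pEcond_nonneg [Fintype X] [Fintype Z] [Fintype U] [Fintype T] [Fintype E]
    (hp0 : ∀ w x z u t e, 0 ≤ p w x z u t e) (w : W) (e : E) : 0 ≤ pEcond p ACC w e :=
  div_nonneg (accE_nonneg ACC hp0 w e) (pACC_nonneg ACC hp0 w)

lemma pScond_eq [Fintype X] [Fintype Z] [Fintype U] [Fintype T] [Fintype E] (w : W) (s : S)
    (z : Z) (u : U) (e : E) :
    pScond p ACC sf w s z u e = accSZUE p ACC sf w s z u e / accZUE p ACC w z u e :=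
  rfl

lemma pZUcondE_eq [Fintype X] [Fintype Z] [Fintype U] [Fintype T] [Fintype E] (w : W) (z : Z)
    (u : U) (e : E) : pZUcondE p ACC w z u e = accZUE p ACC w z u e / accE p ACC w e :=
  rfl

lemma pSZE_eq [Fintype X] [Fintype Z] [Fintype U] [Fintype T] [Fintype E] (w : W) (s : S)
    (z : Z) (e : E) :
    pSZE p ACC sf w s z e = (∑ u, accSZUE p ACC sf w s z u e) / pACC p ACC w := by
  rw [pSZE, Finset.sum_comm]
  rfl

lemma pZE_eq [Fintype X] [Fintype Z] [Fintype U] [Fintype T] [Fintype E] (w : W) (z : Z)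
    (e : E) : pZE p ACC w z e = (∑ u, accZUE p ACC w z u e) / pACC p ACC w := by
  rw [pZE, Finset.sum_comm]
  rfl

lemma accE_eq_of_marginal [Fintype X] [Fintype Z] [Fintype U] [Fintype T] {w w' : W}
    (hmarg : ∀ x u e, (∑ z, ∑ t, p w x z u t e) = (∑ z, ∑ t, p w' x z u t e)) (e : E) :
    accE p ACC w e = accE p ACC w' e := by
  have hpull : ∀ v,
      accE p ACC v e = ∑ x, ∑ u, if (x, u) ∈ ACC then ∑ z, ∑ t, p v x z u t e else 0 := by
    intro v
    unfold accE
    refine Finset.sum_congr rfl fun x _ => ?_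
    rw [Finset.sum_comm]
    refine Finset.sum_congr rfl fun u _ => ?_
    split_ifs <;> simp
  simp only [hpull, hmarg]

lemma pEcond_eq_of_marginal [Fintype X] [Fintype Z] [Fintype U] [Fintype T] [Fintype E]
    {w w' : W} (hmarg : ∀ x u e, (∑ z, ∑ t, p w x z u t e) = (∑ z, ∑ t, p w' x z u t e))
    (e : E) : pEcond p ACC w e = pEcond p ACC w' e := by
  rw [pEcond_eq, pEcond_eq]
  simp only [pACC_eq_sum_accE, accE_eq_of_marginal ACC hmarg]

lemma sum_abs_pSZE_sub_le [Fintype X] [Fintype Z] [Fintype U] [Fintype T] [Fintype E]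
    [Fintype S] (hp0 : ∀ w x z u t e, 0 ≤ p w x z u t e) (k : ℝ) (w : W) (s : S) (e : E) :
    ∑ z, |pSZE p ACC sf w s z e - k * pZE p ACC w z e|
      ≤ accDeviation p ACC sf k w e / pACC p ACC w := by
  rw [accDeviation, Finset.sum_div]
  refine Finset.sum_le_sum fun z _ => ?_
  rw [pSZE_eq, pZE_eq, mul_div_assoc', div_sub_div_same, Finset.mul_sum, ← Finset.sum_sub_distrib,
    abs_div, abs_of_nonneg (pACC_nonneg ACC hp0 w)]
  refine div_le_div_of_nonneg_right ?_ (pACC_nonneg ACC hp0 w)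
  calc |∑ u, (accSZUE p ACC sf w s z u e - k * accZUE p ACC w z u e)|
      ≤ ∑ u, |accSZUE p ACC sf w s z u e - accZUE p ACC w z u e * k| := by
        simpa only [mul_comm k] using Finset.abs_sum_le_sum_abs _ _
    _ ≤ ∑ u, ∑ s', |accSZUE p ACC sf w s' z u e - accZUE p ACC w z u e * k| :=
        Finset.sum_le_sum fun u _ => Finset.single_le_sum
          (f := fun s' => |accSZUE p ACC sf w s' z u e - accZUE p ACC w z u e * k|)
          (fun _ _ => abs_nonneg _) (Finset.mem_univ s)

lemma accDeviation_eq_zero_of_accE_eq_zero [Fintype X] [Fintype Z] [Fintype U] [Fintype T]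
    [Fintype S] (hp0 : ∀ w x z u t e, 0 ≤ p w x z u t e) (k : ℝ) {w : W} {e : E}
    (hE : accE p ACC w e = 0) : accDeviation p ACC sf k w e = 0 := by
  have hZUE : ∀ z u, accZUE p ACC w z u e = 0 := by
    rw [accE_eq_sum_accZUE, Fintype.sum_eq_zero_iff_of_nonneg fun z =>
      Finset.sum_nonneg fun u _ => accZUE_nonneg ACC hp0 w z u e] at hE
    intro z u
    exact congrFun ((Fintype.sum_eq_zero_iff_of_nonneg fun u => accZUE_nonneg ACC hp0 w z u e).mp
      (congrFun hE z)) u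
  have hSZUE : ∀ s z u, accSZUE p ACC sf w s z u e = 0 := fun s z u =>
    accSZUE_eq_zero_of_accZUE_eq_zero ACC sf hp0 s (hZUE z u)
  simp [accDeviation, hZUE, hSZUE]

lemma pZUcondE_mul_sum_abs_pScond_sub [Fintype X] [Fintype Z] [Fintype U] [Fintype T]
    [Fintype E] [Fintype S] (hp0 : ∀ w x z u t e, 0 ≤ p w x z u t e) (k : ℝ) (w : W) (z : Z)
    (u : U) (e : E) :
    pZUcondE p ACC w z u e * ∑ s, |pScond p ACC sf w s z u e - k|
      = (∑ s, |accSZUE p ACC sf w s z u e - accZUE p ACC w z u e * k|) / accE p ACC w e := by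
  simp only [pZUcondE_eq, pScond_eq]
  rw [div_mul_eq_mul_div, Finset.mul_sum]
  congr 1
  exact Finset.sum_congr rfl fun s _ => mul_abs_div_sub k (accZUE_nonneg ACC hp0 w z u e)
    (accSZUE_eq_zero_of_accZUE_eq_zero ACC sf hp0 s)

lemma pEcond_mul_sum_pZUcondE_mul [Fintype X] [Fintype Z] [Fintype U] [Fintype T]
    [Fintype E] [Fintype S] (hp0 : ∀ w x z u t e, 0 ≤ p w x z u t e) (k : ℝ) (w : W) (e : E) :
    pEcond p ACC w e * ∑ z, ∑ u, pZUcondE p ACC w z u e * ∑ s, |pScond p ACC sf w s z u e - k|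
      = accDeviation p ACC sf k w e / pACC p ACC w := by
  rw [pEcond_eq]
  simp only [pZUcondE_mul_sum_abs_pScond_sub ACC sf hp0, ← Finset.sum_div]
  change _ * (accDeviation p ACC sf k w e / accE p ACC w e) = _
  rw [div_mul_eq_mul_div, mul_comm, div_mul_cancel_of_imp
    (accDeviation_eq_zero_of_accE_eq_zero ACC sf hp0 k)]

end Deviation

theorem stmt_7_general [Fintype W] [Nonempty W] [Fintype X] [Fintype Z] [Fintype U] [Fintype T]
    [Fintype E] [Fintype S]
    (p : W → X → Z → U → T → E → ℝ)
    (hp0 : ∀ w x z u t e, 0 ≤ p w x z u t e)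
    -- the marginal `p_w(x,u,e)` does not depend on `w`
    (hmarg : ∀ w w' x u e, (∑ z, ∑ t, p w x z u t e) = (∑ z, ∑ t, p w' x z u t e))
    (ACC : Finset (X × U))
    (w₀ : W)
    (sf : X → T → S) :
    (∑ s : S, ∑ e : E,
        Finset.univ.sup' Finset.univ_nonempty (fun w : W =>
          ∑ z : Z, |pSZE p ACC sf w s z e - (1 / (Fintype.card S : ℝ)) * pZE p ACC w z e|))
      ≤ (Fintype.card S : ℝ) *
        (∑ e : E, pEcond p ACC w₀ e *
          Finset.univ.sup' Finset.univ_nonempty (fun w : W =>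
            ∑ z : Z, ∑ u : U, pZUcondE p ACC w z u e *
              ∑ s : S, |pScond p ACC sf w s z u e - 1 / (Fintype.card S : ℝ)|)) := by
  rw [Finset.sum_comm, Finset.mul_sum]
  refine Finset.sum_le_sum fun e _ => ?_
  refine (Finset.sum_le_card_nsmul _ _ _ fun s _ => ?_).trans_eq
    (by rw [Finset.card_univ, nsmul_eq_mul])
  refine Finset.sup'_le _ _ fun w _ => ?_
  rw [← pEcond_eq_of_marginal ACC (hmarg w w₀)]
  calc _ ≤ accDeviation p ACC sf _ w e / pACC p ACC w := sum_abs_pSZE_sub_le ACC sf hp0 _ w s e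
    _ = _ := (pEcond_mul_sum_pZUcondE_mul ACC sf hp0 _ w e).symm
    _ ≤ _ := mul_le_mul_of_nonneg_left ((Finset.le_sup'_iff _).2 ⟨w, Finset.mem_univ w, le_rfl⟩)
        (pEcond_nonneg ACC hp0 w e)

/-- `d_comp ≤ |S| · d′`. -/
theorem stmt_7 [Fintype W] [Nonempty W] [Fintype X] [Fintype Z] [Fintype U] [Fintype T]
    [Fintype E] [Fintype S]
    (p : W → X → Z → U → T → E → ℝ)
    (hp0 : ∀ w x z u t e, 0 ≤ p w x z u t e)
    (hp1 : ∀ w, ∑ x, ∑ z, ∑ u, ∑ t, ∑ e, p w x z u t e = 1)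
    -- the marginal `p_w(x,u,e)` does not depend on `w`
    (hmarg : ∀ w w' x u e, (∑ z, ∑ t, p w x z u t e) = (∑ z, ∑ t, p w' x z u t e))
    (ACC : Finset (X × U))
    (hACC : ∀ w, 0 < pACC p ACC w)
    (w₀ : W)
    (sf : X → T → S) :
    (∑ s : S, ∑ e : E,
        Finset.univ.sup' Finset.univ_nonempty (fun w : W =>
          ∑ z : Z, |pSZE p ACC sf w s z e - (1 / (Fintype.card S : ℝ)) * pZE p ACC w z e|))
      ≤ (Fintype.card S : ℝ) *
        (∑ e : E, pEcond p ACC w₀ e *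
          Finset.univ.sup' Finset.univ_nonempty (fun w : W =>
            ∑ z : Z, ∑ u : U, pZUcondE p ACC w z u e *
              ∑ s : S, |pScond p ACC sf w s z u e - 1 / (Fintype.card S : ℝ)|)) :=
  stmt_7_general p hp0 hmarg ACC w₀ sf

end
end

section
/- Let q be a probability distribution on a finite product set X × Y with marginals q_X and q_Y, let A ⊆ X and B ⊆ Y be events, and set ACC := A × B. Let ε_deF > 0 and ξ ≥ 2 ε_deF, and suppose that ‖ q − q_X ⊗ q_Y ‖ ≤ ε_deF and q(ACC) ≥ ξ. Then ‖ q(·,· | ACC) − q_X(· | A) ⊗ q_Y(· | B) ‖ ≤ 3 ε_deF / ξ², where q(·,· | ACC), q_X(· | A), q_Y(· | B) denote the conditional distributions given the respective events. -/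
open Classical

/-! Off `A × B` both sides vanish, so the distance is a sum over `A × B` of
`|q / P - g / Q|` with `g = q_X ⊗ q_Y`, `P = q(A × B)` and `Q = g(A × B) = q_X(A) q_Y(B)`.
Normalising two weight vectors on the same set moves them apart by at most twice their
ℓ1 distance `D` divided by `P`: besides `D / P`, the only error is the rescaling of `g`,
which costs `|Q - P| / P ≤ D / P`. Hence the distance is at most `2 ε / P ≤ 2 ε / ξ`,
and `ξ ≤ P ≤ 1` turns this into the bound `3 ε / ξ²`. -/

lemma mul_abs_inv_sub_inv_le {P Q : ℝ} (hP : 0 < P) (hQ : 0 ≤ Q) :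
    Q * |P⁻¹ - Q⁻¹| ≤ |Q - P| / P := by
  rcases hQ.eq_or_lt with rfl | hQ
  · simp only [zero_mul]
    positivity
  apply le_of_eq
  calc Q * |P⁻¹ - Q⁻¹| = |Q * (P⁻¹ - Q⁻¹)| := by rw [abs_mul, abs_of_pos hQ]
    _ = |Q - P| / P := by
      rw [show Q * (P⁻¹ - Q⁻¹) = (Q - P) / P by field_simp, abs_div, abs_of_pos hP]

lemma Finset.sum_abs_div_sum_sub_div_sum_le {ι : Type*} (s : Finset ι) (f g : ι → ℝ)
    (hg : ∀ i ∈ s, 0 ≤ g i) (hf : 0 < ∑ i ∈ s, f i) :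
    ∑ i ∈ s, |f i / ∑ j ∈ s, f j - g i / ∑ j ∈ s, g j|
      ≤ 2 * (∑ i ∈ s, |f i - g i|) / ∑ i ∈ s, f i := by
  set P := ∑ j ∈ s, f j
  set Q := ∑ j ∈ s, g j
  set D := ∑ i ∈ s, |f i - g i|
  have hpoint : ∀ i ∈ s, |f i / P - g i / Q| ≤ |f i - g i| / P + g i * |P⁻¹ - Q⁻¹| := by
    intro i hi
    calc |f i / P - g i / Q| = |(f i - g i) / P + g i * (P⁻¹ - Q⁻¹)| := by
          congr 1; ring
      _ ≤ |(f i - g i) / P| + |g i * (P⁻¹ - Q⁻¹)| := abs_add_le _ _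
      _ = |f i - g i| / P + g i * |P⁻¹ - Q⁻¹| := by
          rw [abs_div, abs_of_pos hf, abs_mul, abs_of_nonneg (hg i hi)]
  have hQP : |Q - P| ≤ D := by
    rw [← Finset.sum_sub_distrib]
    refine (Finset.abs_sum_le_sum_abs _ _).trans (Finset.sum_le_sum fun i _ => ?_)
    rw [abs_sub_comm]
  calc ∑ i ∈ s, |f i / P - g i / Q|
      ≤ ∑ i ∈ s, (|f i - g i| / P + g i * |P⁻¹ - Q⁻¹|) := Finset.sum_le_sum hpoint
    _ = D / P + Q * |P⁻¹ - Q⁻¹| := by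
      rw [Finset.sum_add_distrib, Finset.sum_div, Finset.sum_mul]
    _ ≤ D / P + D / P := by
      gcongr
      exact (mul_abs_inv_sub_inv_le hf (Finset.sum_nonneg hg)).trans (by gcongr)
    _ = 2 * D / P := by ring

lemma sum_abs_cond_sub_cond_mul_cond {X Y : Type*} [Fintype X] [Fintype Y]
    (q : X × Y → ℝ) (qX : X → ℝ) (qY : Y → ℝ) (A : Finset X) (B : Finset Y) (P a b : ℝ) :
    ∑ p : X × Y, |(if p.1 ∈ A ∧ p.2 ∈ B then q p else 0) / P
        - ((if p.1 ∈ A then qX p.1 else 0) / a) * ((if p.2 ∈ B then qY p.2 else 0) / b)|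
      = ∑ p ∈ A ×ˢ B, |q p / P - qX p.1 * qY p.2 / (a * b)| := by
  rw [← Finset.sum_subset (Finset.subset_univ (A ×ˢ B))]
  · refine Finset.sum_congr rfl fun p hp => ?_
    rw [Finset.mem_product] at hp
    simp only [hp, and_self, if_true, div_mul_div_comm]
  · intro p _ hp
    rw [Finset.mem_product, not_and_or] at hp
    rcases hp with hp | hp <;> simp [hp]

/-- if a joint distribution `q` on `X × Y` is `ε_deF`-close in ℓ1 distance to
the product of its marginals, and the product event `ACC = A × B` has probability at
least `ξ ≥ 2 ε_deF`, then the conditional distribution `q(·,·|ACC)` is `3 ε_deF / ξ²`-close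
to the product of the conditional marginals `q_X(·|A) ⊗ q_Y(·|B)`. -/
theorem stmt_11 {X Y : Type} [Fintype X] [Fintype Y]
    (q : X × Y → ℝ)
    (hq0 : ∀ p, 0 ≤ q p) (hq1 : ∑ p, q p = 1)
    (A : Finset X) (B : Finset Y)
    (εdeF ξ : ℝ) (hε : 0 < εdeF) (hξ : 2 * εdeF ≤ ξ)
    (hprod : ∑ p : X × Y, |q p - (∑ y, q (p.1, y)) * (∑ x, q (x, p.2))| ≤ εdeF)
    (hACC : ξ ≤ ∑ x ∈ A, ∑ y ∈ B, q (x, y)) :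
    ∑ p : X × Y,
        |(if p.1 ∈ A ∧ p.2 ∈ B then q p else 0) / (∑ x ∈ A, ∑ y ∈ B, q (x, y))
          - ((if p.1 ∈ A then ∑ y, q (p.1, y) else 0) / (∑ x ∈ A, ∑ y, q (x, y)))
            * ((if p.2 ∈ B then ∑ x, q (x, p.2) else 0) / (∑ y ∈ B, ∑ x, q (x, y)))|
      ≤ 3 * εdeF / ξ ^ 2 := by
  set qX : X → ℝ := fun x => ∑ y, q (x, y)
  set qY : Y → ℝ := fun y => ∑ x, q (x, y)
  set g : X × Y → ℝ := fun p => qX p.1 * qY p.2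
  have hP : ∑ x ∈ A, ∑ y ∈ B, q (x, y) = ∑ p ∈ A ×ˢ B, q p := (Finset.sum_product _ _ _).symm
  have hQ : (∑ x ∈ A, qX x) * (∑ y ∈ B, qY y) = ∑ p ∈ A ×ˢ B, g p := by
    rw [Finset.sum_mul_sum, Finset.sum_product]
  have hP1 : ∑ p ∈ A ×ˢ B, q p ≤ 1 :=
    hq1 ▸ Finset.sum_le_sum_of_subset_of_nonneg (Finset.subset_univ _) fun p _ _ => hq0 p
  have hD : ∑ p ∈ A ×ˢ B, |q p - g p| ≤ εdeF :=
    (Finset.sum_le_sum_of_subset_of_nonneg (Finset.subset_univ _)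
      fun p _ _ => abs_nonneg _).trans hprod
  have hg : ∀ p ∈ A ×ˢ B, 0 ≤ g p := fun p _ =>
    mul_nonneg (Finset.sum_nonneg fun _ _ => hq0 _) (Finset.sum_nonneg fun _ _ => hq0 _)
  have hξ0 : 0 < ξ := by linarith
  rw [hP] at hACC ⊢
  refine (sum_abs_cond_sub_cond_mul_cond q qX qY A B _ _ _).trans_le ?_
  rw [hQ]
  refine (Finset.sum_abs_div_sum_sub_div_sum_le _ q g hg (by linarith)).trans ?_
  calc 2 * (∑ p ∈ A ×ˢ B, |q p - g p|) / ∑ p ∈ A ×ˢ B, q p ≤ 2 * εdeF / ξ := by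
        gcongr
    _ ≤ 2 * εdeF / ξ ^ 2 := by
        gcongr
        nlinarith
    _ ≤ 3 * εdeF / ξ ^ 2 := by gcongr; norm_num
end

section
/- Let |Ψ⟩ ∈ ℂ² ⊗ ℂ² ⊗ ℂ² ⊗ ℂ² be the unit vector |Ψ⟩ = (1/√2)(|φ₋⟩ ⊗ |φ̃₊⟩ + |ψ₊⟩ ⊗ |ψ̃₋⟩), where |φ₋⟩ = (|0⟩|0⟩ − |1⟩|1⟩)/√2, |ψ₊⟩ = (|0⟩|1⟩ + |1⟩|0⟩)/√2, |φ̃₊⟩ = (|0⟩|+⟩ + |1⟩|−⟩)/√2, |ψ̃₋⟩ = (|0⟩|−⟩ − |1⟩|+⟩)/√2, and |±⟩ = (|0⟩ ± |1⟩)/√2. For single bits x, u ∈ {0,1} define the single-qubit unit vector |e_{x,u}⟩ by |e_{0,0}⟩ = |+⟩, |e_{1,0}⟩ = |−⟩, |e_{0,1}⟩ = |0⟩, |e_{1,1}⟩ = |1⟩ (setting u = 0 corresponds to measurement in the X basis and u = 1 to measurement in the Z basis), and for x, u ∈ {0,1}⁴ set P(x|u) := |⟨ e_{x¹,u¹} ⊗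 e_{x²,u²} ⊗ e_{x³,u³} ⊗ e_{x⁴,u⁴} , Ψ ⟩|². Then Σ_{x,u ∈ {0,1}⁴} B(x,u) P(x|u) = 0; equivalently, P(x|u) = 0 whenever u ∈ U₀ and x¹⊕x²⊕x³⊕x⁴ = 0, and P(x|u) = 0 whenever u ∈ U₁ and x¹⊕x²⊕x³⊕x⁴ = 1. -/
open Classical

noncomputable section

/-- Strings of four bits (computational basis labels for four qubits). -/
abbrev Bits4 := Fin 4 → Bool

/-- Parity `x¹ ⊕ x² ⊕ x³ ⊕ x⁴`. -/
def parity (x : Bits4) : Bool := x 0 ^^ (x 1 ^^ (x 2 ^^ x 3))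

/-- Hamming weight. -/
def weight (u : Bits4) : ℕ := (Finset.univ.filter (fun i => u i = true)).card

/-- The Bell coefficient `B(x,u)`. -/
def bell (x u : Bits4) : ℝ :=
  if (parity x = false ∧ weight u = 1) ∨ (parity x = true ∧ weight u = 3) then 1 else 0

/-- A qubit state is given by its amplitudes `Bool → ℂ` in the computational basis. -/
def ket (c : Bool) : Bool → ℂ := fun b => if b = c then 1 else 0

/-- `|+⟩ = (|0⟩ + |1⟩)/√2`. -/
def plusV : Bool → ℂ := fun _ => (1 / Real.sqrt 2 : ℝ)

/-- `|−⟩ = (|0⟩ − |1⟩)/√2`. -/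
def minusV : Bool → ℂ := fun b => if b then -((1 / Real.sqrt 2 : ℝ) : ℂ) else ((1 / Real.sqrt 2 : ℝ) : ℂ)

/-- `|φ₋⟩ = (|00⟩ − |11⟩)/√2` (amplitudes). -/
def phiMinus (a b : Bool) : ℂ :=
  (1 / Real.sqrt 2 : ℝ) * (ket false a * ket false b - ket true a * ket true b)

/-- `|ψ₊⟩ = (|01⟩ + |10⟩)/√2` (amplitudes). -/
def psiPlus (a b : Bool) : ℂ :=
  (1 / Real.sqrt 2 : ℝ) * (ket false a * ket true b + ket true a * ket false b)

/-- `|φ̃₊⟩ = (|0⟩|+⟩ + |1⟩|−⟩)/√2` (amplitudes). -/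
def phiTildePlus (a b : Bool) : ℂ :=
  (1 / Real.sqrt 2 : ℝ) * (ket false a * plusV b + ket true a * minusV b)

/-- `|ψ̃₋⟩ = (|0⟩|−⟩ − |1⟩|+⟩)/√2` (amplitudes). -/
def psiTildeMinus (a b : Bool) : ℂ :=
  (1 / Real.sqrt 2 : ℝ) * (ket false a * minusV b - ket true a * plusV b)

/-- The four-qubit state `|Ψ⟩ = (1/√2)(|φ₋⟩|φ̃₊⟩ + |ψ₊⟩|ψ̃₋⟩)` (amplitudes in the
computational basis). -/
def Psi (b : Bits4) : ℂ :=
  (1 / Real.sqrt 2 : ℝ) *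
    (phiMinus (b 0) (b 1) * phiTildePlus (b 2) (b 3)
      + psiPlus (b 0) (b 1) * psiTildeMinus (b 2) (b 3))

/-- Measurement eigenvector for outcome `x` and setting `u` on one qubit:
`u = false` is the X basis (`|+⟩, |−⟩`), `u = true` the Z basis (`|0⟩, |1⟩`). -/
def meas (x u : Bool) : Bool → ℂ :=
  if u then ket x else (if x then minusV else plusV)

/-- Born-rule probability `P(x|u) = |⟨e_{x¹,u¹} ⊗ ⋯ ⊗ e_{x⁴,u⁴}, Ψ⟩|²`. -/
def quantumP (x u : Bits4) : ℝ :=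
  ‖∑ b : Bits4, (starRingEnd ℂ) (∏ i, meas (x i) (u i) (b i)) * Psi b‖ ^ 2


/-- Auxiliary equivalence between quadruples of booleans and `Bits4`. -/
def e4Aux : (Bool × Bool × Bool × Bool) ≃ Bits4 where
  toFun := fun p => ![p.1, p.2.1, p.2.2.1, p.2.2.2]
  invFun := fun f => (f 0, f 1, f 2, f 3)
  left_inv := by decide
  right_inv := by decide

lemma sum_bits4_aux (f : Bits4 → ℂ) :
    ∑ b : Bits4, f b = ∑ a : Bool, ∑ b : Bool, ∑ c : Bool, ∑ d : Bool, f ![a,b,c,d] := by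
  rw [← Fintype.sum_equiv e4Aux (fun p => f (e4Aux p)) f (fun p => rfl)]
  simp only [Fintype.sum_prod_type]
  rfl

lemma weight_eq_aux (u : Bits4) :
    weight u = (u 0).toNat + (u 1).toNat + (u 2).toNat + (u 3).toNat := by
  rw [weight, Finset.card_filter, Fin.sum_univ_four]
  cases u 0 <;> cases u 1 <;> cases u 2 <;> cases u 3 <;> rfl

lemma quantumP_eq_zero_aux (x u : Bits4)
    (h : ∑ b : Bits4, (starRingEnd ℂ) (∏ i, meas (x i) (u i) (b i)) * Psi b = 0) :
    quantumP x u = 0 := by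
  rw [quantumP, h]; simp

set_option maxHeartbeats 40000000 in
lemma key_aux (x u : Bits4)
    (h : (weight u = 1 ∧ parity x = false) ∨ (weight u = 3 ∧ parity x = true)) :
    quantumP x u = 0 := by
  apply quantumP_eq_zero_aux
  cases hu0 : u 0 <;> cases hu1 : u 1 <;> cases hu2 : u 2 <;> cases hu3 : u 3 <;>
    cases hx0 : x 0 <;> cases hx1 : x 1 <;> cases hx2 : x 2 <;> cases hx3 : x 3 <;>
    rw [weight_eq_aux, hu0, hu1, hu2, hu3] at h <;>
    simp only [parity, hx0, hx1, hx2, hx3] at h <;>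
    first
      | exact absurd h (by decide)
      | (rw [sum_bits4_aux]
         simp only [Fin.prod_univ_four, Matrix.cons_val_zero, Matrix.cons_val_one,
           Matrix.head_cons, Matrix.cons_val_two, Matrix.tail_cons, Matrix.cons_val_three,
           hx0, hx1, hx2, hx3, hu0, hu1, hu2, hu3, Fintype.sum_bool]
         simp [meas, ket, plusV, minusV, Psi, phiMinus, psiPlus, phiTildePlus, psiTildeMinus]
         try ring_nf)

/-- the state `|Ψ⟩` with X/Z measurements violates the Bell inequality
algebraically: the Bell value is `0`; equivalently all probabilities appearing in the
Bell expression vanish. -/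
theorem stmt_14 :
    (∑ u : Bits4, ∑ x : Bits4, bell x u * quantumP x u = 0)
    ∧ (∀ x u : Bits4, weight u = 1 → parity x = false → quantumP x u = 0)
    ∧ (∀ x u : Bits4, weight u = 3 → parity x = true → quantumP x u = 0) := by
  refine ⟨?_, ?_, ?_⟩
  · apply Finset.sum_eq_zero
    intro u _
    apply Finset.sum_eq_zero
    intro x _
    by_cases h : (parity x = false ∧ weight u = 1) ∨ (parity x = true ∧ weight u = 3)
    · rw [key_aux x u (by tauto)]; ring
    · rw [bell, if_neg h]; ring
  · intro x u hw hp; exact key_aux x u (Or.inl ⟨hw, hp⟩)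
  · intro x u hw hp; exact key_aux x u (Or.inr ⟨hw, hp⟩)


end
end
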